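/- arXiv:2205.03496 — 3 statements merged into one kernel-verified Lean document; each statement's English description precedes it below -/
import Mathlib

section
/- For any pairwise distinct j, k, l ∈ {0, 1, …, 2d+1}, the only (x, y, z) ∈ ℂ³ with R_j(x,y,z) = R_k(x,y,z) = R_l(x,y,z) = 0 is (0, 0, 0); that is, no three of the 2d+2 lines {R_k = 0} in ℙ² are concurrent, so the lines are in general position. -/
/-- The linear form `R_k(x,y,z) = (2d+1-k)x + ky - k(2d+1-k)z`, evaluated at `(x,y,z) ∈ ℂ³`. -/
noncomputable def Rf (d k : ℕ) (x y z : ℂ) : ℂ :=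
  (2*(d:ℂ)+1-(k:ℂ))*x + (k:ℂ)*y - (k:ℂ)*(2*(d:ℂ)+1-(k:ℂ))*z

/-!
As a function of `k`, `R_k(x,y,z) = N x + k (y - x - N z) + k² z` with `N = 2d+1` is a polynomial
of degree at most two. If it vanishes at three distinct values of `k`, all three coefficients
vanish, so `z = 0`, then `N x = 0`, hence `x = 0`, and finally `y = 0`.
-/

theorem quadratic_coeffs_eq_zero_of_three_roots {R : Type*} [CommRing R] [IsDomain R]
    {a b c r s t : R} (hrs : r ≠ s) (hrt : r ≠ t) (hst : s ≠ t)
    (hr : a + b * r + c * r ^ 2 = 0) (hs : a + b * s + c * s ^ 2 = 0)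
    (ht : a + b * t + c * t ^ 2 = 0) :
    a = 0 ∧ b = 0 ∧ c = 0 := by
  have hsr : s - r ≠ 0 := sub_ne_zero.mpr hrs.symm
  have htr : t - r ≠ 0 := sub_ne_zero.mpr hrt.symm
  have hts : t - s ≠ 0 := sub_ne_zero.mpr hst.symm
  have hc : c = 0 := by
    have : (s - r) * ((t - r) * ((t - s) * c)) = 0 := by
      linear_combination (s - r) * (ht - hr) - (t - r) * (hs - hr)
    simpa [hsr, htr, hts] using this
  have hb : b = 0 := by
    have : (s - r) * b = 0 := by linear_combination hs - hr - (s ^ 2 - r ^ 2) * hc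
    simpa [hsr] using this
  exact ⟨by linear_combination hr - r * hb - r ^ 2 * hc, hb, hc⟩

theorem Rf_eq_quadratic (d k : ℕ) (x y z : ℂ) :
    Rf d k x y z = (2 * d + 1) * x + (y - x - (2 * d + 1) * z) * k + z * k ^ 2 := by
  unfold Rf
  ring

theorem stmt1_general (d : ℕ) (j k l : ℕ)
    (hjk : j ≠ k) (hjl : j ≠ l) (hkl : k ≠ l) :
    ∀ x y z : ℂ, Rf d j x y z = 0 → Rf d k x y z = 0 → Rf d l x y z = 0 →
      x = 0 ∧ y = 0 ∧ z = 0 := by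
  intro x y z hj hk hl
  rw [Rf_eq_quadratic] at hj hk hl
  obtain ⟨hNx, hlin, hz⟩ := quadratic_coeffs_eq_zero_of_three_roots
    (by exact_mod_cast hjk) (by exact_mod_cast hjl) (by exact_mod_cast hkl) hj hk hl
  have hN : (2 * d + 1 : ℂ) ≠ 0 := by exact_mod_cast (2 * d).succ_ne_zero
  have hx : x = 0 := (mul_eq_zero.mp hNx).resolve_left hN
  exact ⟨hx, by linear_combination hlin + hx + (2 * d + 1) * hz, hz⟩

/-- For pairwise distinct `j, k, l ∈ {0, …, 2d+1}`, the only common zero in `ℂ³` of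
`R_j, R_k, R_l` is the origin: no three of the `2d+2` lines in `ℙ²` are concurrent. -/
theorem stmt1 (d : ℕ) (hd : 1 ≤ d) (j k l : ℕ)
    (hj : j ≤ 2*d+1) (hk : k ≤ 2*d+1) (hl : l ≤ 2*d+1)
    (hjk : j ≠ k) (hjl : j ≠ l) (hkl : k ≠ l) :
    ∀ x y z : ℂ, Rf d j x y z = 0 → Rf d k x y z = 0 → Rf d l x y z = 0 →
      x = 0 ∧ y = 0 ∧ z = 0 :=
  stmt1_general d j k l hjk hjl hkl
end

section
/- The set of common zeros {(x, y) ∈ ℂ² : p(x,y) = 0 and q(x,y) = 0} is exactly { ( jk/(2d+1), (2d+1−j)(2d+1−k)/(2d+1) ) : 0 ≤ j ≤ d < k ≤ 2d+1 } and has exactly (d+1)² elements; moreover, every common zero (x, y, z) ∈ ℂ³ \ {0} of P and Q satisfies z ≠ 0. (These are the indeterminacy points of F, and they all lie in the affine chart z = 1.) -/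
/-- `P = ∏_{k=0}^{d} R_k`, evaluated at `(x,y,z)`. -/
noncomputable def Pf (d : ℕ) (x y z : ℂ) : ℂ :=
  ∏ k ∈ Finset.range (d+1), Rf d k x y z

/-- `Q = ∏_{k=d+1}^{2d+1} R_k`, evaluated at `(x,y,z)`. -/
noncomputable def Qf (d : ℕ) (x y z : ℂ) : ℂ :=
  ∏ k ∈ Finset.Icc (d+1) (2*d+1), Rf d k x y z

/-- The intersection point `( jk/(2d+1), (2d+1-j)(2d+1-k)/(2d+1) ) ∈ ℂ²`. -/
noncomputable def interPt (d j k : ℕ) : ℂ × ℂ :=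
  ((j:ℂ)*(k:ℂ)/(2*(d:ℂ)+1),
   (2*(d:ℂ)+1-(j:ℂ))*(2*(d:ℂ)+1-(k:ℂ))/(2*(d:ℂ)+1))

lemma two_mul_natCast_add_one_ne_zero (d : ℕ) : (2 * (d : ℂ) + 1) ≠ 0 := by
  exact_mod_cast (by omega : 2 * d + 1 ≠ 0)

theorem Rf_eq_zero_and_Rf_eq_zero_iff {d j k : ℕ} (hjk : j ≠ k) (x y z : ℂ) :
    Rf d j x y z = 0 ∧ Rf d k x y z = 0 ↔
      (2 * (d : ℂ) + 1) * x = j * k * z ∧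
        (2 * (d : ℂ) + 1) * y = (2 * (d : ℂ) + 1 - j) * (2 * (d : ℂ) + 1 - k) * z := by
  have hN := two_mul_natCast_add_one_ne_zero d
  have hkj : (k : ℂ) - j ≠ 0 := sub_ne_zero.mpr (by exact_mod_cast hjk.symm)
  unfold Rf
  constructor
  · rintro ⟨hj, hk⟩
    constructor
    · refine mul_left_cancel₀ hkj ?_
      linear_combination (k : ℂ) * hj - (j : ℂ) * hk
    · refine mul_left_cancel₀ hkj ?_
      linear_combination (2 * (d : ℂ) + 1 - j) * hk - (2 * (d : ℂ) + 1 - k) * hj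
  · rintro ⟨hx, hy⟩
    constructor
    · refine mul_left_cancel₀ hN ?_
      linear_combination (2 * (d : ℂ) + 1 - j) * hx + (j : ℂ) * hy
    · refine mul_left_cancel₀ hN ?_
      linear_combination (2 * (d : ℂ) + 1 - k) * hx + (k : ℂ) * hy

theorem Pf_eq_zero_iff {d : ℕ} {x y z : ℂ} : Pf d x y z = 0 ↔ ∃ j ≤ d, Rf d j x y z = 0 := by
  simp [Pf, Finset.prod_eq_zero_iff]

theorem Qf_eq_zero_iff {d : ℕ} {x y z : ℂ} :
    Qf d x y z = 0 ↔ ∃ k, d < k ∧ k ≤ 2 * d + 1 ∧ Rf d k x y z = 0 := by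
  simp [Qf, Finset.prod_eq_zero_iff, and_assoc]

theorem Pf_eq_zero_and_Qf_eq_zero_iff {d : ℕ} {x y z : ℂ} :
    Pf d x y z = 0 ∧ Qf d x y z = 0 ↔
      ∃ j k : ℕ, j ≤ d ∧ d < k ∧ k ≤ 2 * d + 1 ∧
        ((2 * (d : ℂ) + 1) * x = j * k * z ∧
          (2 * (d : ℂ) + 1) * y = (2 * (d : ℂ) + 1 - j) * (2 * (d : ℂ) + 1 - k) * z) := by
  rw [Pf_eq_zero_iff, Qf_eq_zero_iff]
  constructor
  · rintro ⟨⟨j, hj, hRj⟩, ⟨k, hdk, hk, hRk⟩⟩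
    exact ⟨j, k, hj, hdk, hk, (Rf_eq_zero_and_Rf_eq_zero_iff (by omega) x y z).1 ⟨hRj, hRk⟩⟩
  · rintro ⟨j, k, hj, hdk, hk, hxy⟩
    obtain ⟨hRj, hRk⟩ := (Rf_eq_zero_and_Rf_eq_zero_iff (by omega) x y z).2 hxy
    exact ⟨⟨j, hj, hRj⟩, ⟨k, hdk, hk, hRk⟩⟩

theorem mk_eq_interPt_iff {d j k : ℕ} {x y : ℂ} :
    (x, y) = interPt d j k ↔
      (2 * (d : ℂ) + 1) * x = j * k * 1 ∧
        (2 * (d : ℂ) + 1) * y = (2 * (d : ℂ) + 1 - j) * (2 * (d : ℂ) + 1 - k) * 1 := by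
  have hN := two_mul_natCast_add_one_ne_zero d
  simp only [interPt, Prod.mk.injEq, eq_div_iff hN, mul_one, mul_comm _ x, mul_comm _ y]

theorem interPt_injOn (d : ℕ) :
    Set.InjOn (fun p : ℕ × ℕ => interPt d p.1 p.2) {p | p.1 ≤ d ∧ d < p.2} := by
  rintro ⟨j, k⟩ ⟨hj, hk⟩ ⟨j', k'⟩ ⟨hj', hk'⟩ heq
  have hN := two_mul_natCast_add_one_ne_zero d
  simp only [interPt, Prod.mk.injEq, div_left_inj' hN] at heq
  obtain ⟨hprod, hprod'⟩ := heq
  have hsum : (j : ℂ) + k = j' + k' :=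
    mul_left_cancel₀ hN (by linear_combination hprod - hprod')
  -- `j` and `k` are the roots of `X² - (j'+k')X + j'k'`, and so are `j'` and `k'`.
  have hroot : ((j : ℂ) - j') * ((k : ℂ) - j') = 0 := by
    linear_combination hprod - (j' : ℂ) * hsum
  rcases mul_eq_zero.mp hroot with h | h
  · have hjj : j = j' := by exact_mod_cast sub_eq_zero.mp h
    subst hjj
    have hkk : k = k' := by exact_mod_cast add_left_cancel hsum
    rw [hkk]
  · have : k = j' := by exact_mod_cast sub_eq_zero.mp h
    omega

theorem stmt3_general (d : ℕ) :
    ({v : ℂ × ℂ | Pf d v.1 v.2 1 = 0 ∧ Qf d v.1 v.2 1 = 0}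
        = {v : ℂ × ℂ | ∃ j k : ℕ, j ≤ d ∧ d < k ∧ k ≤ 2*d+1 ∧ v = interPt d j k}) ∧
    ({v : ℂ × ℂ | Pf d v.1 v.2 1 = 0 ∧ Qf d v.1 v.2 1 = 0}.ncard = (d+1)^2) ∧
    (∀ x y z : ℂ, ¬(x = 0 ∧ y = 0 ∧ z = 0) →
      Pf d x y z = 0 → Qf d x y z = 0 → z ≠ 0) := by
  have hset : {v : ℂ × ℂ | Pf d v.1 v.2 1 = 0 ∧ Qf d v.1 v.2 1 = 0}
      = {v : ℂ × ℂ | ∃ j k : ℕ, j ≤ d ∧ d < k ∧ k ≤ 2*d+1 ∧ v = interPt d j k} := by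
    ext ⟨x, y⟩
    simp only [Set.mem_ofPred_eq, Pf_eq_zero_and_Qf_eq_zero_iff, mk_eq_interPt_iff]
  have himage : {v : ℂ × ℂ | ∃ j k : ℕ, j ≤ d ∧ d < k ∧ k ≤ 2*d+1 ∧ v = interPt d j k}
      = ↑((Finset.range (d+1) ×ˢ Finset.Ioc d (2*d+1)).image
          (fun p : ℕ × ℕ => interPt d p.1 p.2)) := by
    ext v
    simp [eq_comm, and_assoc]
  refine ⟨hset, ?_, ?_⟩
  · rw [hset, himage, Set.ncard_coe_finset, Finset.card_image_of_injOn, Finset.card_product,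
      Finset.card_range, Nat.card_Ioc, show 2 * d + 1 - d = d + 1 by omega, sq]
    exact (interPt_injOn d).mono fun p hp => by simp at hp ⊢; omega
  · rintro x y z hne hP hQ rfl
    obtain ⟨j, k, -, -, -, hx, hy⟩ := Pf_eq_zero_and_Qf_eq_zero_iff.1 ⟨hP, hQ⟩
    simp only [mul_zero, mul_eq_zero, two_mul_natCast_add_one_ne_zero, false_or] at hx hy
    exact hne ⟨hx, hy, rfl⟩

/-- The common zero set `{p = q = 0} ⊂ ℂ²` is exactly the set of intersection points
`interPt d j k` for `0 ≤ j ≤ d < k ≤ 2d+1`; it has exactly `(d+1)²` elements; and every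
common zero `(x,y,z) ≠ 0` of the homogeneous polynomials `P` and `Q` has `z ≠ 0`. -/
theorem stmt3 (d : ℕ) (hd : 1 ≤ d) :
    ({v : ℂ × ℂ | Pf d v.1 v.2 1 = 0 ∧ Qf d v.1 v.2 1 = 0}
        = {v : ℂ × ℂ | ∃ j k : ℕ, j ≤ d ∧ d < k ∧ k ≤ 2*d+1 ∧ v = interPt d j k}) ∧
    ({v : ℂ × ℂ | Pf d v.1 v.2 1 = 0 ∧ Qf d v.1 v.2 1 = 0}.ncard = (d+1)^2) ∧
    (∀ x y z : ℂ, ¬(x = 0 ∧ y = 0 ∧ z = 0) →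
      Pf d x y z = 0 → Qf d x y z = 0 → z ≠ 0) :=
  stmt3_general d
end

section
/- Let f ∈ ℝ[x,y] be a polynomial and let U be a bounded connected component of the open set {(x,y) ∈ ℝ² : f(x,y) ≠ 0}. Then there exists a point (x₀, y₀) ∈ U with ∂f/∂x(x₀,y₀) = 0 and ∂f/∂y(x₀,y₀) = 0; that is, every relatively compact component of the complement of the real curve {f = 0} contains a critical point of f. -/
/-!
A bounded component `U` of `{f ≠ 0}` has compact closure, and `f` vanishes on its frontier, since a
frontier point where `f ≠ 0` would join the component. If, say, `f > 0` somewhere on `U`, the maximum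
of `f` over `closure U` is positive, so it is attained in the open set `U` and is a local maximum of
`f`; there both partial derivatives vanish by Fermat's theorem along the coordinate lines.
-/

open MvPolynomial

theorem MvPolynomial.hasDerivAt_eval_update {σ : Type*} [DecidableEq σ]
    (f : MvPolynomial σ ℝ) (v : σ → ℝ) (i : σ) (t : ℝ) :
    HasDerivAt (fun s => eval (Function.update v i s) f)
      (eval (Function.update v i t) (pderiv i f)) t := by
  induction f using MvPolynomial.induction_on with
  | C a => simpa using hasDerivAt_const t a
  | add p q hp hq => simpa using hp.fun_add hq
  | mul_X p j hp =>
    rcases eq_or_ne j i with rfl | hji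
    · simpa [pderiv_mul, mul_comm, add_comm] using hp.fun_mul (hasDerivAt_id t)
    · simpa [pderiv_mul, Function.update_of_ne hji, Pi.single_apply, hji, mul_comm]
        using hp.mul_const (v j)

theorem MvPolynomial.eval_pderiv_eq_zero_of_isLocalExtr {σ : Type*}
    {f : MvPolynomial σ ℝ} {v : σ → ℝ} (h : IsLocalExtr (fun x => eval x f) v) (i : σ) :
    eval v (pderiv i f) = 0 := by
  classical
  rw [← Function.update_eq_self i v] at h
  have hline : IsLocalExtr (fun s => eval (Function.update v i s) f) (v i) :=
    h.comp_continuous (continuous_const.update i continuous_id).continuousAt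
  simpa using hline.hasDerivAt_eq_zero (hasDerivAt_eval_update f v i (v i))

theorem mem_connectedComponentIn_of_mem_closure {X : Type*} [TopologicalSpace X]
    {S : Set X} {v w : X} (hw : w ∈ closure (connectedComponentIn S v)) (hwS : w ∈ S) :
    w ∈ connectedComponentIn S v := by
  by_cases hvS : v ∈ S
  · have hC : IsPreconnected (insert w (connectedComponentIn S v)) :=
      isPreconnected_connectedComponentIn.subset_closure (Set.subset_insert _ _)
        (Set.insert_subset hw subset_closure)
    exact hC.subset_connectedComponentIn (Set.mem_insert_of_mem _ (mem_connectedComponentIn hvS))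
      (Set.insert_subset hwS (connectedComponentIn_subset _ _)) (Set.mem_insert _ _)
  · simp [connectedComponentIn_eq_empty hvS] at hw

theorem exists_isLocalExtr_mem_of_isCompact_closure {X α : Type*} [TopologicalSpace X]
    [LinearOrder α] [TopologicalSpace α] [OrderClosedTopology α]
    {g : X → α} {U : Set X} {a : X} {c : α} (hU : IsOpen U) (hK : IsCompact (closure U))
    (hg : ContinuousOn g (closure U)) (ha : a ∈ U) (hga : g a ≠ c)
    (hfr : ∀ z ∈ closure U \ U, g z = c) : ∃ x ∈ U, IsLocalExtr g x := by
  rcases hga.lt_or_gt with hlt | hgt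
  · obtain ⟨x, hx, hmin⟩ := hK.exists_isLocalMin_mem_open subset_closure hg (subset_closure ha)
      (fun z hz => hfr z hz ▸ hlt) hU
    exact ⟨x, hx, hmin.isExtr⟩
  · obtain ⟨x, hx, hmax⟩ := hK.exists_isLocalMax_mem_open subset_closure hg (subset_closure ha)
      (fun z hz => hfr z hz ▸ hgt) hU
    exact ⟨x, hx, hmax.isExtr⟩

/-- Every bounded (relatively compact) connected component `U` of the complement
`{f ≠ 0}` of the real curve `{f = 0}` of a real polynomial `f ∈ ℝ[x,y]` contains a
critical point of `f`. -/
theorem stmt13 (f : MvPolynomial (Fin 2) ℝ) (U : Set (ℝ × ℝ))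
    (hU : ∃ v ∈ {w : ℝ × ℝ | eval ![w.1, w.2] f ≠ 0},
      U = connectedComponentIn {w : ℝ × ℝ | eval ![w.1, w.2] f ≠ 0} v)
    (hb : Bornology.IsBounded U) :
    ∃ v ∈ U, eval ![v.1, v.2] (pderiv 0 f) = 0 ∧ eval ![v.1, v.2] (pderiv 1 f) = 0 := by
  obtain ⟨a, ha, rfl⟩ := hU
  have hg : Continuous fun w : ℝ × ℝ => eval ![w.1, w.2] f :=
    f.continuous_eval.comp (by fun_prop)
  obtain ⟨x, hxU, hx⟩ := exists_isLocalExtr_mem_of_isCompact_closure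
    (isOpen_ne_fun hg continuous_const).connectedComponentIn hb.isCompact_closure
    hg.continuousOn (mem_connectedComponentIn ha) ha
    fun z hz => not_not.mp fun hz0 => hz.2 (mem_connectedComponentIn_of_mem_closure hz.1 hz0)
  have hpoly : IsLocalExtr (fun y : Fin 2 → ℝ => eval y f) ![x.1, x.2] := by
    have hvec : ∀ y : Fin 2 → ℝ, ![y 0, y 1] = y := fun y => by ext i; fin_cases i <;> rfl
    simpa only [Function.comp_def, hvec] using
      hx.comp_continuous (g := fun y : Fin 2 → ℝ => (y 0, y 1)) (b := ![x.1, x.2]) (by fun_prop)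
  exact ⟨x, hxU, eval_pderiv_eq_zero_of_isLocalExtr hpoly 0,
    eval_pderiv_eq_zero_of_isLocalExtr hpoly 1⟩
end
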